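/- arXiv:2309.11393 — 2 statements merged into one kernel-verified Lean document; each statement's English description precedes it below -/
import Mathlib

section
/- Consider the P consensus estimator y^k = w − x^k, x^{k+1} = x^k + L y^k with constant input w ∈ ℝ^n and initialization 𝟙ᵀx^0 = 0, where the Laplacian L satisfies L𝟙 = 0 and 𝟙ᵀL = 0, the eigenvalue 1 of I − L has algebraic multiplicity one, and every other eigenvalue of I − L has modulus strictly less than 1. Then the estimator has zero steady-state error: for every agent i, y_i^k → (1/n)∑_{j=1}^n w_j as k → ∞. -/
/-!
With `M = 1 - L` the outputs obey `y^{k+1} = M y^k`, and `M` has all row and column sums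
equal to one. Hence the averaging matrix `J = (1/n) 𝟙𝟙ᵀ` satisfies `MJ = JM = J² = J`, so
`M^k = (M - J)^k + J` for `k ≥ 1`. A nonzero eigenvalue of `M - J` has an eigenvector with zero
sum, so it is an eigenvalue of `M`, and it is not `1`: together with `𝟙` that eigenvector would
make the eigenvalue `1` of `M` geometrically, hence algebraically, double. Thus `M - J` has
spectral radius below one, `(M - J)^k → 0` by Gelfand's formula, and `y^k = M^k y^0 → J y^0`,
whose entries are the average of `y^0`, which is that of `w` because `𝟙ᵀx^0 = 0`.
-/

open Matrix Filter Topology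

theorem IsIdempotentElem.sub_pow {R : Type*} [Ring R] {a e : R} (he : IsIdempotentElem e)
    (hae : a * e = e) (hea : e * a = e) {k : ℕ} (hk : k ≠ 0) : (a - e) ^ k = a ^ k - e := by
  have hpow : ∀ m : ℕ, a ^ m * e = e := fun m => by
    induction m with
    | zero => rw [pow_zero, one_mul]
    | succ m ih => rw [pow_succ', mul_assoc, ih, hae]
  induction k with
  | zero => exact absurd rfl hk
  | succ k ih =>
    rcases eq_or_ne k 0 with rfl | hk'
    · simp
    · rw [pow_succ, ih hk', sub_mul, mul_sub, mul_sub, ← pow_succ, hpow, hea, he.eq]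
      abel

section Spectrum

variable {A : Type*} [NormedRing A] [NormedAlgebra ℂ A] [CompleteSpace A]

theorem tendsto_pow_atTop_nhds_zero_of_spectralRadius_lt_one {a : A}
    (ha : spectralRadius ℂ a < 1) : Tendsto (fun k : ℕ => a ^ k) atTop (𝓝 0) := by
  obtain ⟨c, hac, hc1⟩ := ENNReal.lt_iff_exists_nnreal_btwn.mp ha
  have hbound : ∀ᶠ k : ℕ in atTop, ‖a ^ k‖ ≤ (c : ℝ) ^ k := by
    filter_upwards [(spectrum.pow_nnnorm_pow_one_div_tendsto_nhds_spectralRadius a).eventually_lt_const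
      hac, eventually_ge_atTop 1] with k hk hk1
    rw [one_div, ENNReal.rpow_inv_lt_iff (by positivity), ENNReal.rpow_natCast] at hk
    exact_mod_cast hk.le
  exact squeeze_zero_norm' hbound
    (tendsto_pow_atTop_nhds_zero_of_lt_one c.2 (by exact_mod_cast hc1))

theorem tendsto_pow_atTop_nhds_zero_of_forall_spectrum_norm_lt_one {a : A}
    (ha : ∀ μ ∈ spectrum ℂ a, ‖μ‖ < 1) : Tendsto (fun k : ℕ => a ^ k) atTop (𝓝 0) := by
  cases subsingleton_or_nontrivial A
  · simpa only [Subsingleton.elim _ (0 : A)] using tendsto_const_nhds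
  · refine tendsto_pow_atTop_nhds_zero_of_spectralRadius_lt_one ?_
    exact_mod_cast spectrum.spectralRadius_lt_of_forall_lt a (r := 1) fun μ hμ =>
      by exact_mod_cast ha μ hμ

end Spectrum

namespace Matrix

variable {ι K : Type*} [Fintype ι] [Field K]

variable (ι K) in
def averaging : Matrix ι ι K := (Fintype.card ι : K)⁻¹ • vecMulVec 1 1

theorem averaging_mulVec (v : ι → K) :
    averaging ι K *ᵥ v = ((Fintype.card ι : K)⁻¹ * ∑ i, v i) • 1 := by
  ext
  simp [averaging, mulVec, dotProduct, Finset.mul_sum]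

theorem mul_averaging {M : Matrix ι ι K} (hM : M *ᵥ 1 = 1) :
    M * averaging ι K = averaging ι K := by
  rw [averaging, Matrix.mul_smul, mul_vecMulVec, hM]

theorem averaging_mul {M : Matrix ι ι K} (hM : 1 ᵥ* M = 1) :
    averaging ι K * M = averaging ι K := by
  rw [averaging, smul_mul, vecMulVec_mul, hM]

theorem one_vecMul_averaging (hι : (Fintype.card ι : K) ≠ 0) :
    1 ᵥ* averaging ι K = 1 := by
  rw [averaging, vecMul_smul, vecMul_vecMulVec, one_dotProduct_one, smul_smul,
    inv_mul_cancel₀ hι, one_smul]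

theorem isIdempotentElem_averaging (hι : (Fintype.card ι : K) ≠ 0) :
    IsIdempotentElem (averaging ι K) :=
  averaging_mul (one_vecMul_averaging hι)

variable [DecidableEq ι]

theorem tendsto_pow_atTop_nhds_zero_of_forall_spectrum_norm_lt_one {M : Matrix ι ι ℂ}
    (hM : ∀ μ ∈ spectrum ℂ M, ‖μ‖ < 1) : Tendsto (fun k : ℕ => M ^ k) atTop (𝓝 0) := by
  -- Any submultiplicative norm inducing the product topology will do.
  let := Matrix.linftyOpNormedRing (n := ι) (α := ℂ)
  let := Matrix.linftyOpNormedAlgebra (n := ι) (R := ℂ) (α := ℂ)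
  have := FiniteDimensional.complete ℂ (Matrix ι ι ℂ)
  exact _root_.tendsto_pow_atTop_nhds_zero_of_forall_spectrum_norm_lt_one hM

theorem mem_spectrum_iff_exists_mulVec_eq_smul {M : Matrix ι ι K} {μ : K} :
    μ ∈ spectrum K M ↔ ∃ v ≠ 0, M *ᵥ v = μ • v := by
  rw [← spectrum_toLin', ← Module.End.hasEigenvalue_iff_mem_spectrum,
    Module.End.hasEigenvalue_iff, Submodule.ne_bot_iff]
  simp only [Module.End.mem_eigenspace_iff, toLin'_apply, and_comm]

theorem exists_mulVec_eq_smul_of_mem_spectrum_sub_averaging (hι : (Fintype.card ι : K) ≠ 0)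
    {M : Matrix ι ι K} (hM : 1 ᵥ* M = 1) {μ : K} (hμ : μ ∈ spectrum K (M - averaging ι K))
    (hμ0 : μ ≠ 0) : ∃ v ≠ 0, M *ᵥ v = μ • v ∧ ∑ i, v i = 0 := by
  obtain ⟨v, hv0, hv⟩ := mem_spectrum_iff_exists_mulVec_eq_smul.mp hμ
  have hker : 1 ᵥ* (M - averaging ι K) = 0 := by
    rw [vecMul_sub, hM, one_vecMul_averaging hι, sub_self]
  have hsum : ∑ i, v i = 0 := by
    have h := congrArg (1 ⬝ᵥ ·) hv
    simp only [dotProduct_mulVec, hker, zero_dotProduct, dotProduct_smul, one_dotProduct,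
      smul_eq_mul] at h
    exact (mul_eq_zero.mp h.symm).resolve_left hμ0
  refine ⟨v, hv0, ?_, hsum⟩
  simpa [sub_mulVec, averaging_mulVec, hsum] using hv

theorem two_le_rootMultiplicity_one_charpoly (hι : (Fintype.card ι : K) ≠ 0)
    {M : Matrix ι ι K} (hM : M *ᵥ 1 = 1) {v : ι → K} (hv0 : v ≠ 0) (hv : M *ᵥ v = v)
    (hsum : ∑ i, v i = 0) : 2 ≤ M.charpoly.rootMultiplicity 1 := by
  have hind : LinearIndependent K ![1, v] := by
    rw [LinearIndependent.pair_iff]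
    intro s t hst
    have hs : s = 0 := by
      simpa [dotProduct_add, one_dotProduct, hsum, hι] using congrArg (1 ⬝ᵥ ·) hst
    subst hs
    exact ⟨rfl, by simpa [hv0] using hst⟩
  have hle : Submodule.span K (Set.range ![1, v]) ≤ Module.End.eigenspace (toLin' M) 1 := by
    rw [Submodule.span_le, Set.range_subset_iff]
    intro j
    fin_cases j <;> simp [hM, hv]
  calc 2 = Module.finrank K (Submodule.span K (Set.range ![1, v])) := by
        rw [finrank_span_eq_card hind, Fintype.card_fin]
    _ ≤ Module.finrank K (Module.End.eigenspace (toLin' M) 1) := Submodule.finrank_mono hle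
    _ ≤ (toLin' M).charpoly.rootMultiplicity 1 := LinearMap.finrank_eigenspace_le _ 1
    _ = M.charpoly.rootMultiplicity 1 := by rw [charpoly_toLin']

theorem norm_lt_one_of_mem_spectrum_sub_averaging [Nonempty ι] {M : Matrix ι ι ℂ}
    (hrow : M *ᵥ 1 = 1) (hcol : 1 ᵥ* M = 1) (hmult : M.charpoly.rootMultiplicity 1 ≤ 1)
    (hspec : ∀ μ ∈ spectrum ℂ M, μ ≠ 1 → ‖μ‖ < 1) {μ : ℂ}
    (hμ : μ ∈ spectrum ℂ (M - averaging ι ℂ)) : ‖μ‖ < 1 := by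
  rcases eq_or_ne μ 0 with rfl | hμ0
  · simp
  have hι : (Fintype.card ι : ℂ) ≠ 0 := Nat.cast_ne_zero.mpr Fintype.card_ne_zero
  obtain ⟨v, hv0, hv, hsum⟩ := exists_mulVec_eq_smul_of_mem_spectrum_sub_averaging hι hcol hμ hμ0
  refine hspec μ (mem_spectrum_iff_exists_mulVec_eq_smul.mpr ⟨v, hv0, hv⟩) ?_
  rintro rfl
  have := two_le_rootMultiplicity_one_charpoly hι hrow hv0 (by rwa [one_smul] at hv) hsum
  omega

theorem tendsto_pow_atTop_nhds_averaging [Nonempty ι] {M : Matrix ι ι ℂ}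
    (hrow : M *ᵥ 1 = 1) (hcol : 1 ᵥ* M = 1) (hmult : M.charpoly.rootMultiplicity 1 ≤ 1)
    (hspec : ∀ μ ∈ spectrum ℂ M, μ ≠ 1 → ‖μ‖ < 1) :
    Tendsto (fun k : ℕ => M ^ k) atTop (𝓝 (averaging ι ℂ)) := by
  have hι : (Fintype.card ι : ℂ) ≠ 0 := Nat.cast_ne_zero.mpr Fintype.card_ne_zero
  have hpow (k : ℕ) : (M - averaging ι ℂ) ^ (k + 1) + averaging ι ℂ = M ^ (k + 1) := by
    rw [(isIdempotentElem_averaging hι).sub_pow (mul_averaging hrow) (averaging_mul hcol)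
      k.succ_ne_zero, sub_add_cancel]
  have hN := tendsto_pow_atTop_nhds_zero_of_forall_spectrum_norm_lt_one fun μ hμ =>
    norm_lt_one_of_mem_spectrum_sub_averaging hrow hcol hmult hspec hμ
  rw [← tendsto_add_atTop_iff_nat 1]
  simpa [hpow] using ((tendsto_add_atTop_iff_nat 1).mpr hN).add_const (averaging ι ℂ)

theorem tendsto_pow_atTop_nhds_averaging_of_map_ofReal [Nonempty ι] {M : Matrix ι ι ℝ}
    (hrow : M *ᵥ 1 = 1) (hcol : 1 ᵥ* M = 1)
    (hmult : (M.map (algebraMap ℝ ℂ)).charpoly.rootMultiplicity 1 ≤ 1)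
    (hspec : ∀ μ ∈ spectrum ℂ (M.map (algebraMap ℝ ℂ)), μ ≠ 1 → ‖μ‖ < 1) :
    Tendsto (fun k : ℕ => M ^ k) atTop (𝓝 (averaging ι ℝ)) := by
  have hrowℂ : M.map (algebraMap ℝ ℂ) *ᵥ 1 = 1 := by
    ext i
    simpa [hrow] using (RingHom.map_mulVec (algebraMap ℝ ℂ) M 1 i).symm
  have hcolℂ : 1 ᵥ* M.map (algebraMap ℝ ℂ) = 1 := by
    ext i
    simpa [hcol] using (RingHom.map_vecMul (algebraMap ℝ ℂ) M 1 i).symm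
  have h := ((continuous_id.matrix_map Complex.continuous_re).tendsto _).comp
    (tendsto_pow_atTop_nhds_averaging hrowℂ hcolℂ hmult hspec)
  have hmap (k : ℕ) : (M.map (algebraMap ℝ ℂ) ^ k).map Complex.re = M ^ k := by
    rw [← RingHom.mapMatrix_apply, ← map_pow]
    ext
    simp
  have hJ : (averaging ι ℂ).map Complex.re = averaging ι ℝ := by
    ext
    simp [averaging]
  simpa only [Function.comp_def, id_eq, hmap, hJ] using h

end Matrix

/-- The P consensus estimator `y k = w - x k`,
`x (k+1) = x k + L *ᵥ y k` with constant input `w`, initialization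
`∑ i, x 0 i = 0` (i.e. `𝟙ᵀ x⁰ = 0`), where the Laplacian satisfies `L𝟙 = 0`
and `𝟙ᵀL = 0`, the eigenvalue `1` of `I - L` has algebraic multiplicity one,
and every other complex eigenvalue of `I - L` has modulus strictly less than
`1`, has zero steady-state error: each output `y k i` converges to the average
`(1/n) * ∑ j, w j` of the inputs. -/
theorem P_estimator_zero_steady_state_error
    (n : ℕ) (L : Matrix (Fin n) (Fin n) ℝ)
    (hrow : L *ᵥ (fun _ => (1 : ℝ)) = 0)
    (hcol : (fun _ => (1 : ℝ)) ᵥ* L = 0)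
    (hmult : ((((1 : Matrix (Fin n) (Fin n) ℝ) - L).map
        (algebraMap ℝ ℂ)).charpoly).rootMultiplicity 1 = 1)
    (hspec : ∀ μ ∈ spectrum ℂ (((1 : Matrix (Fin n) (Fin n) ℝ) - L).map
        (algebraMap ℝ ℂ)), μ ≠ 1 → ‖μ‖ < 1)
    (w : Fin n → ℝ) (x y : ℕ → Fin n → ℝ)
    (hy : ∀ k, y k = w - x k)
    (hx : ∀ k, x (k + 1) = x k + L *ᵥ y k)
    (hx0 : ∑ i, x 0 i = 0) :
    ∀ i, Tendsto (fun k => y k i) atTop (𝓝 ((1 / (n : ℝ)) * ∑ j, w j)) := by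
  intro i
  have : Nonempty (Fin n) := ⟨i⟩
  have hrowM : (1 - L) *ᵥ 1 = 1 := by
    rw [sub_mulVec, one_mulVec, show L *ᵥ 1 = 0 from hrow, sub_zero]
  have hcolM : 1 ᵥ* (1 - L) = 1 := by
    rw [vecMul_sub, vecMul_one, show 1 ᵥ* L = 0 from hcol, sub_zero]
  have hyM (k : ℕ) : y k = (1 - L) ^ k *ᵥ y 0 := by
    induction k with
    | zero => rw [pow_zero, one_mulVec]
    | succ k ih =>
      rw [pow_succ', ← mulVec_mulVec, ← ih, hy (k + 1), hx k, hy k, sub_mulVec, one_mulVec]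
      abel
  have hsum : ∑ j, y 0 j = ∑ j, w j := by
    simp [hy 0, Finset.sum_sub_distrib, hx0]
  have hlim : Tendsto (fun k => (1 - L) ^ k *ᵥ y 0) atTop (𝓝 (averaging (Fin n) ℝ *ᵥ y 0)) :=
    ((continuous_id.matrix_mulVec continuous_const).tendsto _).comp
      (tendsto_pow_atTop_nhds_averaging_of_map_ofReal hrowM hcolM hmult.le hspec)
  simpa [← hyM, averaging_mulVec, hsum] using tendsto_pi_nhds.mp hlim i
end

section
/- Consider two P consensus estimators connected in series: ξ^{k+1} = ξ^k + L p^k with p^k = w^k − ξ^k, followed by x^{k+1} = x^k + L y^k with y^k = p^k − x^k, where 𝟙ᵀξ^0 = 0 and 𝟙ᵀx^0 = 0. Assume the Laplacian L satisfies L𝟙 = 0 and 𝟙ᵀL = 0, the eigenvalue 1 of I − L has algebraic multiplicity one, and every other eigenvalue of I − L has modulus strictly less than 1. If the input is affine in k, i.e., w^k = a + k b for fixed vectors a, b ∈ ℝ^n, then the cascaded estimator asymptotically tracks the average: y^k − ((1/n)∑_{i=1}^n w_i^k)𝟙 → 0 as k → ∞. -/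
/-!
Put `M = 1 - L` and `J = 𝟙𝟙ᵀ / n`. Since `L𝟙 = 0` and `𝟙ᵀL = 0`, the sums of both states are
invariant, so `y k` has the same average as `w k` and the tracking error is `z k = (1 - J) y k`;
moreover `(1 - J) M = N (1 - J)` with `N = M - J`. An eigenvector of `N` for `μ ≠ 0` has zero
sum, so it is an eigenvector of `M`, and for `μ = 1` it would be a second one besides `𝟙`,
contradicting simplicity. Hence all eigenvalues of `N` lie in the open unit disc.

A P estimator satisfies `y (k + 1) = M y k + (u (k + 1) - u k)`. For the ramp input the
differences of `p` therefore evolve by `M`, and with `q k = (1 - J) (p (k + 1) - p k)` we get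
`q (k + 1) = N q k`, `z (k + 1) = N z k + q k`, hence
`z (k + 1) = N ^ (k + 1) z 0 + (k + 1) N ^ k q 0`. By Gelfand's formula `‖N ^ k‖` decays
geometrically, which beats the linear factor.
-/

open Matrix Filter Topology
open scoped NNReal

theorem eventually_norm_pow_lt_pow_of_spectralRadius_lt {A : Type*} [NormedRing A]
    [NormedAlgebra ℂ A] [CompleteSpace A] {a : A} {r : ℝ≥0} (ha : spectralRadius ℂ a < r) :
    ∀ᶠ k : ℕ in atTop, ‖a ^ k‖ < r ^ k := by
  have hgelfand := spectrum.pow_nnnorm_pow_one_div_tendsto_nhds_spectralRadius a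
  filter_upwards [hgelfand.eventually_lt_const ha, eventually_ge_atTop 1] with k hk hk1
  have hk0 : (k : ℝ) ≠ 0 := by positivity
  have := ENNReal.rpow_lt_rpow hk (by positivity : (0 : ℝ) < k)
  rw [← ENNReal.rpow_mul, one_div, inv_mul_cancel₀ hk0, ENNReal.rpow_one,
    ENNReal.rpow_natCast] at this
  exact_mod_cast this

theorem tendsto_pow_mul_norm_pow_of_forall_norm_lt_one {A : Type*} [NormedRing A]
    [NormedAlgebra ℂ A] [CompleteSpace A] {a : A} (ha : ∀ μ ∈ spectrum ℂ a, ‖μ‖ < 1) (m : ℕ) :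
    Tendsto (fun k : ℕ => (k : ℝ) ^ m * ‖a ^ k‖) atTop (𝓝 0) := by
  cases subsingleton_or_nontrivial A
  · simp [Subsingleton.elim (a ^ _) 0]
  have hρ : spectralRadius ℂ a < 1 :=
    spectrum.spectralRadius_lt_of_forall_lt a fun μ hμ => by exact_mod_cast ha μ hμ
  obtain ⟨ρ, hρa, hρ1⟩ := ENNReal.lt_iff_exists_nnreal_btwn.1 hρ
  refine squeeze_zero' (.of_forall fun k => by positivity) ?_
    (tendsto_pow_const_mul_const_pow_of_lt_one m ρ.2 (by exact_mod_cast hρ1))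
  filter_upwards [eventually_norm_pow_lt_pow_of_spectralRadius_lt hρa] with k hk
  gcongr
  exact_mod_cast hk.le

theorem Matrix.cascade_eq_pow_mulVec {ι R : Type*} [Fintype ι] [DecidableEq ι] [CommSemiring R]
    {A : Matrix ι ι R} {z q : ℕ → ι → R}
    (hq : ∀ k, q (k + 1) = A *ᵥ q k) (hz : ∀ k, z (k + 1) = A *ᵥ z k + q k) (k : ℕ) :
    z (k + 1) = A ^ (k + 1) *ᵥ z 0 + (k + 1) • (A ^ k *ᵥ q 0) := by
  have hq' : ∀ k, q k = A ^ k *ᵥ q 0 := fun k => by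
    induction k with
    | zero => simp
    | succ k ih => rw [hq, ih, mulVec_mulVec, pow_succ']
  induction k with
  | zero => simp [hz]
  | succ k ih =>
    rw [hz, ih, hq' (k + 1), mulVec_add, mulVec_smul, mulVec_mulVec, mulVec_mulVec, ← pow_succ',
      ← pow_succ']
    module

def Matrix.IsSchurStable {ι : Type*} [Fintype ι] [DecidableEq ι] (A : Matrix ι ι ℝ) : Prop :=
  ∀ μ ∈ spectrum ℂ (A.map (algebraMap ℝ ℂ)), ‖μ‖ < 1

namespace Matrix.IsSchurStable

attribute [local instance] Matrix.linftyOpNormedAddCommGroup Matrix.linftyOpNormedRing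
  Matrix.linftyOpNormedAlgebra

variable {ι : Type*} [Fintype ι] [DecidableEq ι] {A : Matrix ι ι ℝ}

theorem tendsto_pow_mul_norm_pow (hA : A.IsSchurStable) (m : ℕ) :
    Tendsto (fun k : ℕ => (k : ℝ) ^ m * ‖A ^ k‖) atTop (𝓝 0) := by
  have : CompleteSpace (Matrix ι ι ℂ) := FiniteDimensional.complete ℂ _
  refine (tendsto_pow_mul_norm_pow_of_forall_norm_lt_one hA m).congr fun k => ?_
  rw [← Matrix.map_pow]
  simp [linfty_opNorm_def]

theorem tendsto_zero_of_cascade (hA : A.IsSchurStable) {z q : ℕ → ι → ℝ}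
    (hq : ∀ k, q (k + 1) = A *ᵥ q k) (hz : ∀ k, z (k + 1) = A *ᵥ z k + q k) :
    Tendsto z atTop (𝓝 0) := by
  rw [← tendsto_add_atTop_iff_nat 1]
  have h0 := hA.tendsto_pow_mul_norm_pow 0
  have h1 := hA.tendsto_pow_mul_norm_pow 1
  simp only [pow_zero, one_mul, pow_one] at h0 h1
  have hbound : Tendsto (fun k : ℕ => ‖A ^ (k + 1)‖ * ‖z 0‖ + ((k + 1 : ℕ) : ℝ) * (‖A ^ k‖ * ‖q 0‖))
      atTop (𝓝 0) := by
    simpa [add_mul, mul_assoc] using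
      ((h0.comp (tendsto_add_atTop_nat 1)).mul_const ‖z 0‖).add ((h1.add h0).mul_const ‖q 0‖)
  refine squeeze_zero_norm (fun k => ?_) hbound
  rw [cascade_eq_pow_mulVec hq hz, ← Nat.cast_smul_eq_nsmul ℝ]
  refine (norm_add_le _ _).trans (add_le_add (linfty_opNorm_mulVec _ _) ?_)
  rw [norm_smul, Real.norm_natCast]
  gcongr
  exact linfty_opNorm_mulVec _ _

end Matrix.IsSchurStable

theorem Matrix.mem_spectrum_iff_exists_mulVec_eq_smul_s6 {ι K : Type*} [Fintype ι] [DecidableEq ι]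
    [Field K] {A : Matrix ι ι K} {μ : K} :
    μ ∈ spectrum K A ↔ ∃ v ≠ 0, A *ᵥ v = μ • v := by
  rw [← spectrum_toLin', ← Module.End.hasEigenvalue_iff_mem_spectrum,
    Module.End.hasEigenvalue_iff, Submodule.ne_bot_iff]
  simp [and_comm]

theorem Matrix.eq_smul_of_rootMultiplicity_charpoly_le_one {ι K : Type*} [Fintype ι]
    [DecidableEq ι] [Field K] {A : Matrix ι ι K} {μ : K}
    (hA : A.charpoly.rootMultiplicity μ ≤ 1) {u v : ι → K} (hu : A *ᵥ u = μ • u) (hu0 : u ≠ 0)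
    (hv : A *ᵥ v = μ • v) : ∃ c : K, v = c • u := by
  have hE : Module.finrank K (Module.End.eigenspace (toLin' A) μ) ≤ 1 := by
    refine (LinearMap.finrank_eigenspace_le (toLin' A) μ).trans ?_
    rwa [Matrix.charpoly_toLin']
  obtain ⟨g, hg⟩ := finrank_le_one_iff.1 hE
  obtain ⟨a, ha⟩ := hg ⟨u, Module.End.mem_eigenspace_iff.2 (by simpa using hu)⟩
  obtain ⟨b, hb⟩ := hg ⟨v, Module.End.mem_eigenspace_iff.2 (by simpa using hv)⟩
  have ha' : a • (g : ι → K) = u := congrArg Subtype.val ha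
  have hb' : b • (g : ι → K) = v := congrArg Subtype.val hb
  have ha0 : a ≠ 0 := by
    rintro rfl
    exact hu0 (by simp [← ha'])
  exact ⟨b / a, by rw [← ha', ← hb', smul_smul, div_mul_cancel₀ _ ha0]⟩

section Averaging

variable {ι K : Type*} [Fintype ι] [Field K]

def averagingMatrix (ι K : Type*) [Fintype ι] [Field K] : Matrix ι ι K :=
  of fun _ _ => (Fintype.card ι : K)⁻¹

theorem averagingMatrix_mulVec (v : ι → K) :
    averagingMatrix ι K *ᵥ v = fun _ => (Fintype.card ι : K)⁻¹ * ∑ i, v i := by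
  ext
  simp [averagingMatrix, mulVec, dotProduct, Finset.mul_sum]

theorem averagingMatrix_map {L : Type*} [Field L] (f : K →+* L) :
    (averagingMatrix ι K).map f = averagingMatrix ι L := by
  ext
  simp [averagingMatrix]

variable [Nonempty ι] [CharZero K]

theorem averagingMatrix_mulVec_one : averagingMatrix ι K *ᵥ 1 = 1 := by
  ext
  simp [averagingMatrix_mulVec]

theorem one_vecMul_averagingMatrix : 1 ᵥ* averagingMatrix ι K = 1 := by
  ext
  simp [averagingMatrix, vecMul, dotProduct]

theorem averagingMatrix_mul_of_one_vecMul {M : Matrix ι ι K} (hM : 1 ᵥ* M = 1) :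
    averagingMatrix ι K * M = averagingMatrix ι K := by
  ext i j
  simpa [averagingMatrix, mul_apply, ← Finset.mul_sum, vecMul, dotProduct] using
    congrArg (· * (Fintype.card ι : K)⁻¹) (congrFun hM j)

theorem mul_averagingMatrix_of_mulVec_one {M : Matrix ι ι K} (hM : M *ᵥ 1 = 1) :
    M * averagingMatrix ι K = averagingMatrix ι K := by
  ext i j
  simpa [averagingMatrix, mul_apply, ← Finset.sum_mul, mulVec, dotProduct] using
    congrArg (· * (Fintype.card ι : K)⁻¹) (congrFun hM i)

variable [DecidableEq ι]

theorem one_sub_averagingMatrix_mul {M : Matrix ι ι K} (hM : M *ᵥ 1 = 1) (hM' : 1 ᵥ* M = 1) :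
    (1 - averagingMatrix ι K) * M = (M - averagingMatrix ι K) * (1 - averagingMatrix ι K) := by
  rw [sub_mul, one_mul, averagingMatrix_mul_of_one_vecMul hM', mul_sub, mul_one, sub_mul,
    mul_averagingMatrix_of_mulVec_one hM,
    mul_averagingMatrix_of_mulVec_one averagingMatrix_mulVec_one, sub_self, sub_zero]

theorem spectrum_sub_averagingMatrix_subset {M : Matrix ι ι K} (hM : M *ᵥ 1 = 1)
    (hM' : 1 ᵥ* M = 1) (hmult : M.charpoly.rootMultiplicity 1 ≤ 1) :
    spectrum K (M - averagingMatrix ι K) ⊆ insert 0 (spectrum K M \ {1}) := by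
  intro μ hμ
  obtain ⟨v, hv0, hv⟩ := mem_spectrum_iff_exists_mulVec_eq_smul_s6.1 hμ
  rcases eq_or_ne μ 0 with rfl | hμ0
  · exact Set.mem_insert _ _
  have hsum : ∑ i, v i = 0 := by
    have hcol : 1 ᵥ* (M - averagingMatrix ι K) = 0 := by
      rw [vecMul_sub, hM', one_vecMul_averagingMatrix, sub_self]
    have h := congrArg (1 ⬝ᵥ ·) hv
    simp only [dotProduct_mulVec, hcol, zero_dotProduct, dotProduct_smul, one_dotProduct,
      smul_eq_mul] at h
    exact (mul_eq_zero.1 h.symm).resolve_left hμ0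
  have hMv : M *ᵥ v = μ • v := by
    simpa [sub_mulVec, averagingMatrix_mulVec, hsum, ← Pi.zero_def] using hv
  refine Or.inr ⟨mem_spectrum_iff_exists_mulVec_eq_smul_s6.2 ⟨v, hv0, hMv⟩, fun hμ1 => hv0 ?_⟩
  obtain ⟨c, rfl⟩ := eq_smul_of_rootMultiplicity_charpoly_le_one hmult (by simpa using hM)
    one_ne_zero (hMv.trans (by rw [hμ1]))
  simp_all

end Averaging

theorem Matrix.isSchurStable_sub_averagingMatrix {ι : Type*} [Fintype ι] [DecidableEq ι]
    [Nonempty ι] {M : Matrix ι ι ℝ} (hM : M *ᵥ 1 = 1) (hM' : 1 ᵥ* M = 1)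
    (hmult : (M.map (algebraMap ℝ ℂ)).charpoly.rootMultiplicity 1 ≤ 1)
    (hspec : ∀ μ ∈ spectrum ℂ (M.map (algebraMap ℝ ℂ)), μ ≠ 1 → ‖μ‖ < 1) :
    (M - averagingMatrix ι ℝ).IsSchurStable := by
  have hMc : M.map (algebraMap ℝ ℂ) *ᵥ 1 = 1 := by
    ext i
    have h := RingHom.map_mulVec (algebraMap ℝ ℂ) M 1 i
    rw [hM] at h
    simpa using h.symm
  have hMc' : 1 ᵥ* M.map (algebraMap ℝ ℂ) = 1 := by
    ext i
    have h := RingHom.map_vecMul (algebraMap ℝ ℂ) M 1 i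
    rw [hM'] at h
    simpa using h.symm
  intro μ hμ
  rw [Matrix.map_sub _ (map_sub _), averagingMatrix_map] at hμ
  rcases spectrum_sub_averagingMatrix_subset hMc hMc' hmult hμ with rfl | ⟨hμM, hμ1⟩
  · simp
  · exact hspec μ hμM hμ1

section PEstimator

variable {ι R : Type*} [Fintype ι] [CommRing R]

structure IsPEstimator (L : Matrix ι ι R) (u x y : ℕ → ι → R) : Prop where
  output_eq : ∀ k, y k = u k - x k
  state_succ : ∀ k, x (k + 1) = x k + L *ᵥ y k

namespace IsPEstimator

variable {L : Matrix ι ι R} {u x y : ℕ → ι → R}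

theorem sum_state_eq (h : IsPEstimator L u x y) (hL : 1 ᵥ* L = 0) (k : ℕ) :
    ∑ i, x k i = ∑ i, x 0 i := by
  induction k with
  | zero => rfl
  | succ k ih =>
    rw [h.state_succ, ← one_dotProduct, dotProduct_add, dotProduct_mulVec, hL, zero_dotProduct,
      add_zero, one_dotProduct, ih]

variable [DecidableEq ι]

theorem output_succ (h : IsPEstimator L u x y) (k : ℕ) :
    y (k + 1) = (1 - L) *ᵥ y k + (u (k + 1) - u k) := by
  rw [h.output_eq (k + 1), h.state_succ, sub_mulVec, one_mulVec, h.output_eq k]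
  abel

theorem output_sub_succ (h : IsPEstimator L u x y) {b : ι → R} (hu : ∀ k, u (k + 1) - u k = b)
    (k : ℕ) : y (k + 2) - y (k + 1) = (1 - L) *ᵥ (y (k + 1) - y k) := by
  rw [h.output_succ (k + 1), h.output_succ k, hu, hu, mulVec_sub]
  abel

end IsPEstimator

theorem IsPEstimator.tendsto_centered_output_of_ramp [DecidableEq ι] [Nonempty ι]
    {L : Matrix ι ι ℝ} {w ξ p x y : ℕ → ι → ℝ}
    (hfirst : IsPEstimator L w ξ p) (hsecond : IsPEstimator L p x y)
    (hM : (1 - L) *ᵥ 1 = 1) (hM' : 1 ᵥ* (1 - L) = 1)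
    (hstable : (1 - L - averagingMatrix ι ℝ).IsSchurStable) {b : ι → ℝ}
    (hw : ∀ k, w (k + 1) - w k = b) :
    Tendsto (fun k => (1 - averagingMatrix ι ℝ) *ᵥ y k) atTop (𝓝 0) := by
  refine hstable.tendsto_zero_of_cascade
    (q := fun k => (1 - averagingMatrix ι ℝ) *ᵥ (p (k + 1) - p k)) (fun k => ?_) (fun k => ?_)
  · rw [hfirst.output_sub_succ hw, mulVec_mulVec, one_sub_averagingMatrix_mul hM hM',
      ← mulVec_mulVec]
  · rw [hsecond.output_succ, mulVec_add, mulVec_mulVec, one_sub_averagingMatrix_mul hM hM',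
      ← mulVec_mulVec]

end PEstimator

/-- Two P consensus estimators connected in series
(`p k = w k - ξ k`, `ξ (k+1) = ξ k + L *ᵥ p k`, followed by `y k = p k - x k`,
`x (k+1) = x k + L *ᵥ y k`), initialized with `𝟙ᵀξ⁰ = 0` and `𝟙ᵀx⁰ = 0`, where
the Laplacian satisfies `L𝟙 = 0`, `𝟙ᵀL = 0`, the eigenvalue `1` of `I - L` has
algebraic multiplicity one, and every other complex eigenvalue of `I - L` has
modulus strictly less than `1`: for an affine input `w k = a + k • b`, the
cascaded (second-order) estimator asymptotically tracks the average, i.e.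
`y k - ((1/n) ∑ i, w k i) 𝟙 → 0`. -/
theorem cascaded_P_estimators_track_ramp_average
    (n : ℕ) (L : Matrix (Fin n) (Fin n) ℝ)
    (hrow : L *ᵥ (fun _ => (1 : ℝ)) = 0)
    (hcol : (fun _ => (1 : ℝ)) ᵥ* L = 0)
    (hmult : ((((1 : Matrix (Fin n) (Fin n) ℝ) - L).map
        (algebraMap ℝ ℂ)).charpoly).rootMultiplicity 1 = 1)
    (hspec : ∀ μ ∈ spectrum ℂ (((1 : Matrix (Fin n) (Fin n) ℝ) - L).map
        (algebraMap ℝ ℂ)), μ ≠ 1 → ‖μ‖ < 1)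
    (a b : Fin n → ℝ) (w : ℕ → Fin n → ℝ)
    (hw : ∀ k, w k = a + (k : ℝ) • b)
    (ξ p x y : ℕ → Fin n → ℝ)
    (hp : ∀ k, p k = w k - ξ k)
    (hξ : ∀ k, ξ (k + 1) = ξ k + L *ᵥ p k)
    (hy : ∀ k, y k = p k - x k)
    (hx : ∀ k, x (k + 1) = x k + L *ᵥ y k)
    (hξ0 : ∑ i, ξ 0 i = 0)
    (hx0 : ∑ i, x 0 i = 0) :
    Tendsto (fun k => y k - ((1 / (n : ℝ)) * ∑ i, w k i) • (fun _ => (1 : ℝ) : Fin n → ℝ))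
      atTop (𝓝 0) := by
  cases isEmpty_or_nonempty (Fin n)
  · exact tendsto_const_nhds.congr fun _ => Subsingleton.elim _ _
  have hfirst : IsPEstimator L w ξ p := ⟨hp, hξ⟩
  have hsecond : IsPEstimator L p x y := ⟨hy, hx⟩
  have hM : (1 - L) *ᵥ 1 = 1 := by rw [sub_mulVec, one_mulVec, show L *ᵥ 1 = 0 from hrow, sub_zero]
  have hM' : 1 ᵥ* (1 - L) = 1 := by rw [vecMul_sub, vecMul_one, show 1 ᵥ* L = 0 from hcol, sub_zero]
  have hsum : ∀ k, ∑ i, y k i = ∑ i, w k i := fun k => by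
    simp [hy, hp, Finset.sum_sub_distrib, hfirst.sum_state_eq hcol, hsecond.sum_state_eq hcol,
      hξ0, hx0]
  refine (hfirst.tendsto_centered_output_of_ramp hsecond hM hM'
    (isSchurStable_sub_averagingMatrix hM hM' hmult.le hspec) (b := b)
    fun k => by rw [hw, hw]; push_cast; module).congr fun k => ?_
  ext i
  simp [sub_mulVec, averagingMatrix_mulVec, hsum, div_eq_inv_mul]
end
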